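/- arXiv:2511.21441 — 2 statements merged into one kernel-verified Lean document; each statement's English description precedes it below -/
import Mathlib

section
/- With α* = α₀/(1 + A/log n) for A > 0, d > 0, α₀ > d, and n sufficiently large, one has n^{d/(2α* + d)} ≥ c^{1/2} · n^{d/(2α₀ + d)} where c = exp(2dAα₀/(2α₀+d)²) > 1. -/
theorem stmt_6 (d A α₀ : ℝ) (hd : 0 < d) (hA : 0 < A) (hα₀ : d < α₀) :
    Real.exp (2 * d * A * α₀ / (2 * α₀ + d) ^ 2) > 1 ∧
    ∃ N : ℕ, ∀ n : ℕ, N ≤ n → 2 ≤ n →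
      (n : ℝ) ^ (d / (2 * (α₀ / (1 + A / Real.log n)) + d)) ≥
        (Real.exp (2 * d * A * α₀ / (2 * α₀ + d) ^ 2)) ^ ((1 : ℝ) / 2) *
          (n : ℝ) ^ (d / (2 * α₀ + d)) := by
  have hα0 : 0 < α₀ := lt_trans hd hα₀
  have hs : 0 < 2 * α₀ + d := by linarith
  constructor
  · exact Real.one_lt_exp_iff.2 (by positivity)
  · refine ⟨⌈Real.exp (d * A / (2 * α₀ + d))⌉₊, fun n hN hn2 => ?_⟩
    have hn1 : (1 : ℝ) < n := by
      have : (2 : ℝ) ≤ n := by exact_mod_cast hn2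
      linarith
    have hnpos : (0 : ℝ) < n := by linarith
    have hL : 0 < Real.log n := Real.log_pos hn1
    set L := Real.log n with hLdef
    have hLge : d * A / (2 * α₀ + d) ≤ L := by
      rw [hLdef, Real.le_log_iff_exp_le hnpos]
      exact le_trans (Nat.le_ceil _) (by exact_mod_cast hN)
    have hsL : d * A ≤ (2 * α₀ + d) * L := by
      rw [div_le_iff₀ hs] at hLge
      linarith [hLge]
    have ht : 0 < 1 + A / L := by positivity
    have hD : 0 < 2 * (α₀ / (1 + A / L)) + d := by positivity
    set E := 2 * d * A * α₀ / (2 * α₀ + d) ^ 2 with hE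
    have hkey : E * (1 / 2) + L * (d / (2 * α₀ + d)) ≤
        L * (d / (2 * (α₀ / (1 + A / L)) + d)) := by
      have hden : 0 < (2 * α₀ + d) * L + d * A := by positivity
      have heq : L * (d / (2 * (α₀ / (1 + A / L)) + d)) -
          (E * (1 / 2) + L * (d / (2 * α₀ + d))) =
          d * A * α₀ * ((2 * α₀ + d) * L - d * A) /
            ((2 * α₀ + d) ^ 2 * ((2 * α₀ + d) * L + d * A)) := by
        rw [hE]
        field_simp
        ring
      have hnn : 0 ≤ d * A * α₀ * ((2 * α₀ + d) * L - d * A) /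
          ((2 * α₀ + d) ^ 2 * ((2 * α₀ + d) * L + d * A)) := by
        apply div_nonneg _ (by positivity)
        have : 0 ≤ (2 * α₀ + d) * L - d * A := by linarith
        positivity
      linarith
    have h1 : (n : ℝ) ^ (d / (2 * (α₀ / (1 + A / L)) + d)) =
        Real.exp (L * (d / (2 * (α₀ / (1 + A / L)) + d))) :=
      Real.rpow_def_of_pos hnpos _
    have h2 : (n : ℝ) ^ (d / (2 * α₀ + d)) = Real.exp (L * (d / (2 * α₀ + d))) :=
      Real.rpow_def_of_pos hnpos _
    have h3 : (Real.exp E) ^ ((1 : ℝ) / 2) = Real.exp (E * (1 / 2)) := by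
      rw [Real.rpow_def_of_pos (Real.exp_pos _), Real.log_exp]
    rw [ge_iff_le, h1, h2, h3, ← Real.exp_add, Real.exp_le_exp]
    exact hkey
end

section
/- With ζ_n = ∫_d^{log n} exp(−n^{d/(2α+d)}) dα, there exist constants c₁, c₂ > 0 and N such that c₁ log n ≤ ζ_n ≤ c₂ log n for all n ≥ N; i.e., ζ_n ≍ log n. -/
/-!
Write `L = log n`. The integrand `exp (-n ^ (d / (2α + d)))` lies in `(0, 1]`, which gives
`ζ_n ≤ L - d`. For `α ≥ L / 2` the exponent satisfies `L d / (2α + d) ≤ d`, so the integrand is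
at least `exp (-e ^ d)` on `(L / 2, L]`; once `L ≥ 2d` this interval lies inside `(d, L]`, and
`ζ_n ≥ exp (-e ^ d) · L / 2`.
-/

open MeasureTheory Real Set

noncomputable def zetaIntegrand (d x α : ℝ) : ℝ := exp (-x ^ (d / (2 * α + d)))

section

variable {d x α : ℝ}

lemma norm_zetaIntegrand_le_one (hx : 0 ≤ x) : ‖zetaIntegrand d x α‖ ≤ 1 := by
  rw [zetaIntegrand, Real.norm_of_nonneg (exp_pos _).le]
  exact exp_le_one_iff.2 (neg_nonpos.2 (rpow_nonneg hx _))

lemma integrableOn_zetaIntegrand {s : Set ℝ} (hx : 0 ≤ x) (hs : volume s < ⊤) :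
    IntegrableOn (zetaIntegrand d x) s := by
  have hmeas : Measurable (zetaIntegrand d x) := by unfold zetaIntegrand; fun_prop
  exact .of_bound hs hmeas.aestronglyMeasurable 1
    (ae_of_all _ fun _ => norm_zetaIntegrand_le_one hx)

lemma exp_neg_exp_le_zetaIntegrand (hd : 0 ≤ d) (hx : 0 < x) (hs : 0 < 2 * α + d)
    (hα : log x ≤ 2 * α + d) : exp (-exp d) ≤ zetaIntegrand d x α := by
  have hexponent : log x * (d / (2 * α + d)) ≤ d :=
    calc log x * (d / (2 * α + d)) ≤ (2 * α + d) * (d / (2 * α + d)) :=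
          mul_le_mul_of_nonneg_right hα (div_nonneg hd hs.le)
      _ = d := mul_div_cancel₀ d hs.ne'
  refine exp_le_exp.2 (neg_le_neg ?_)
  rw [rpow_def_of_pos hx]
  exact exp_le_exp.2 hexponent

lemma setIntegral_zetaIntegrand_le (hx : 0 ≤ x) (hdx : d ≤ log x) :
    ∫ α in Ioc d (log x), zetaIntegrand d x α ≤ log x - d := by
  calc ∫ α in Ioc d (log x), zetaIntegrand d x α
      ≤ ‖∫ α in Ioc d (log x), zetaIntegrand d x α‖ := le_norm_self _
    _ ≤ 1 * volume.real (Ioc d (log x)) :=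
        norm_setIntegral_le_of_norm_le_const measure_Ioc_lt_top
          fun _ _ => norm_zetaIntegrand_le_one hx
    _ = log x - d := by rw [volume_real_Ioc_of_le hdx, one_mul]

lemma exp_neg_exp_mul_log_le_setIntegral_zetaIntegrand (hd : 0 ≤ d) (hx : 0 < x)
    (hdx : 2 * d ≤ log x) :
    exp (-exp d) / 2 * log x ≤ ∫ α in Ioc d (log x), zetaIntegrand d x α := by
  set L := log x
  have hsub : Ioc (L / 2) L ⊆ Ioc d L := Ioc_subset_Ioc_left (by linarith)
  have hint : IntegrableOn (zetaIntegrand d x) (Ioc d L) :=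
    integrableOn_zetaIntegrand hx.le measure_Ioc_lt_top
  have hbound : ∀ α ∈ Ioc (L / 2) L, exp (-exp d) ≤ zetaIntegrand d x α := fun α hα =>
    exp_neg_exp_le_zetaIntegrand hd hx (by linarith [hα.1]) (by linarith [hα.1])
  calc exp (-exp d) / 2 * L = exp (-exp d) * volume.real (Ioc (L / 2) L) := by
        rw [volume_real_Ioc_of_le (by linarith)]; ring
    _ ≤ ∫ α in Ioc (L / 2) L, zetaIntegrand d x α :=
        setIntegral_ge_of_const_le_real measurableSet_Ioc measure_Ioc_lt_top.ne hbound
          (hint.mono_set hsub)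
    _ ≤ ∫ α in Ioc d L, zetaIntegrand d x α :=
        setIntegral_mono_set hint (ae_of_all _ fun _ => (exp_pos _).le) hsub.eventuallyLE

end

theorem stmt_16_general (d : ℕ) :
    ∃ c₁ c₂ : ℝ, 0 < c₁ ∧ 0 < c₂ ∧ ∃ N : ℕ, ∀ n : ℕ, N ≤ n → 3 ≤ n →
      c₁ * Real.log n ≤
        (∫ α in Set.Ioc (d : ℝ) (Real.log n),
          Real.exp (-(n : ℝ) ^ ((d : ℝ) / (2 * α + d)))) ∧
      (∫ α in Set.Ioc (d : ℝ) (Real.log n),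
          Real.exp (-(n : ℝ) ^ ((d : ℝ) / (2 * α + d)))) ≤ c₂ * Real.log n := by
  refine ⟨exp (-exp d) / 2, 1, by positivity, one_pos, ⌈exp (2 * d)⌉₊, fun n hN _ => ?_⟩
  have hn : exp (2 * d) ≤ n := (Nat.le_ceil _).trans (by exact_mod_cast hN)
  have hn_pos : (0 : ℝ) < n := (exp_pos _).trans_le hn
  have hlog : 2 * (d : ℝ) ≤ log n := (le_log_iff_exp_le hn_pos).2 hn
  have hd : (0 : ℝ) ≤ d := d.cast_nonneg
  refine ⟨exp_neg_exp_mul_log_le_setIntegral_zetaIntegrand hd hn_pos hlog, ?_⟩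
  calc _ ≤ log n - d := setIntegral_zetaIntegrand_le hn_pos.le (by linarith)
    _ ≤ 1 * log n := by linarith

theorem stmt_16 (d : ℕ) (hd : 1 ≤ d) :
    ∃ c₁ c₂ : ℝ, 0 < c₁ ∧ 0 < c₂ ∧ ∃ N : ℕ, ∀ n : ℕ, N ≤ n → 3 ≤ n →
      c₁ * Real.log n ≤
        (∫ α in Set.Ioc (d : ℝ) (Real.log n),
          Real.exp (-(n : ℝ) ^ ((d : ℝ) / (2 * α + d)))) ∧
      (∫ α in Set.Ioc (d : ℝ) (Real.log n),
          Real.exp (-(n : ℝ) ^ ((d : ℝ) / (2 * α + d)))) ≤ c₂ * Real.log n :=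
  stmt_16_general d
end
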